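/- For every nonnegative integer r, every n ∈ {2, …, N} and every f ∈ ℂ^N, ‖(P_n − P_{n−1}) f‖₂ ≤ (2 sin(1/2))^{−r} · ω_r(f, λ_n^{−1/2}). -/

import Mathlib

/-! In the eigenbasis `u` every `specOp u c` acts as the diagonal multiplier `c`, and the unitary
change of basis preserves the Euclidean norm, so norms are computed on coefficients
`⟨u_j, f⟩`. The difference `P_n - P_{n-1}` keeps only the `n`-th coefficient, which
`(T_s - I)^r` multiplies by `(e^{is√λ_n} - 1)^r`, of modulus `(2 |sin (s √λ_n / 2)|)^r`.
At `s = λ_n^{-1/2}` this is `(2 sin (1/2))^r`, so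
`(2 sin (1/2))^r |⟨u_n, f⟩| ≤ ‖(T_s - I)^r f‖₂ ≤ ω_r(f, λ_n^{-1/2})`. -/

open Matrix

noncomputable section

/-- Euclidean (2-)norm on `ℂ^N`. -/
def cnorm2 {N : ℕ} (f : Fin N → ℂ) : ℝ := Real.sqrt (∑ i, ‖f i‖ ^ 2)

/-- The spectral operator `Σ_j c_j u_j u_j^*`. -/
def specOp {N : ℕ} (u : Fin N → Fin N → ℂ) (c : Fin N → ℂ) : Matrix (Fin N) (Fin N) ℂ :=
  ∑ j, c j • Matrix.vecMulVec (u j) (star (u j))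

/-- The graph translation operator `T_s = Σ_j e^{i s √λ_j} u_j u_j^*`. -/
def Tmat {N : ℕ} (u : Fin N → Fin N → ℂ) (lam : Fin N → ℝ) (s : ℝ) :
    Matrix (Fin N) (Fin N) ℂ :=
  specOp u (fun j => Complex.exp (Complex.I * (s : ℂ) * (Real.sqrt (lam j) : ℂ)))

/-- The `r`-th modulus of smoothness `ω_r(f,t) = sup_{|s| ≤ t} ‖(T_s - I)^r f‖₂`. -/
def omegaMod {N : ℕ} (u : Fin N → Fin N → ℂ) (lam : Fin N → ℝ) (r : ℕ) (f : Fin N → ℂ)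
    (t : ℝ) : ℝ :=
  ⨆ s : {s : ℝ // |s| ≤ t}, cnorm2 (((Tmat u lam s.1 - 1) ^ r).mulVec f)

/-- Orthogonal projection `P_n = Σ_{j=1}^n u_j u_j^*` onto `span(u_1, …, u_n)`
(`u_k` corresponds to the index `k-1 : Fin N`). -/
def Pproj {N : ℕ} (u : Fin N → Fin N → ℂ) (n : ℕ) : Matrix (Fin N) (Fin N) ℂ :=
  specOp u (fun j => if (j : ℕ) < n then 1 else 0)

lemma cnorm2_eq_norm_toLp {N : ℕ} (f : Fin N → ℂ) :
    cnorm2 f = ‖(WithLp.toLp 2 f : EuclideanSpace ℂ (Fin N))‖ := by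
  rw [cnorm2, EuclideanSpace.norm_eq]

lemma cnorm2_mulVec_of_mem_unitaryGroup {N : ℕ} {U : Matrix (Fin N) (Fin N) ℂ}
    (hU : U ∈ unitaryGroup (Fin N) ℂ) (f : Fin N → ℂ) : cnorm2 (U *ᵥ f) = cnorm2 f := by
  rw [cnorm2_eq_norm_toLp, cnorm2_eq_norm_toLp, ← toEuclideanCLM_toLp]
  exact ContinuousLinearMap.norm_map_of_mem_unitary (Unitary.map_mem toEuclideanCLM hU) _

lemma norm_le_cnorm2 {N : ℕ} (f : Fin N → ℂ) (i : Fin N) : ‖f i‖ ≤ cnorm2 f := by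
  rw [cnorm2_eq_norm_toLp]; exact PiLp.norm_apply_le (WithLp.toLp 2 f) i

lemma cnorm2_single {N : ℕ} (i : Fin N) (a : ℂ) : cnorm2 (Pi.single i a) = ‖a‖ := by
  rw [cnorm2_eq_norm_toLp]; exact PiLp.norm_single (β := fun _ : Fin N => ℂ) 2 i a

lemma cnorm2_mul_le {N : ℕ} {c : Fin N → ℂ} {B : ℝ} (hB : 0 ≤ B) (hc : ∀ j, ‖c j‖ ≤ B)
    (f : Fin N → ℂ) : cnorm2 (c * f) ≤ B * cnorm2 f := by
  rw [cnorm2, cnorm2, ← Real.sqrt_sq hB, ← Real.sqrt_mul (sq_nonneg B), Finset.mul_sum]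
  gcongr with j
  rw [Pi.mul_apply, norm_mul, mul_pow]
  gcongr
  exact hc j

def eigvecMatrix {N : ℕ} (u : Fin N → Fin N → ℂ) : Matrix (Fin N) (Fin N) ℂ := (Matrix.of u)ᵀ

lemma specOp_eq_conj_diagonal {N : ℕ} (u : Fin N → Fin N → ℂ) (c : Fin N → ℂ) :
    specOp u c = eigvecMatrix u * diagonal c * star (eigvecMatrix u) := by
  ext a b
  simp only [specOp, eigvecMatrix, Matrix.sum_apply, Matrix.smul_apply, vecMulVec_apply,
    Pi.star_apply, smul_eq_mul, mul_apply, transpose_apply, of_apply, star_apply, diagonal_apply,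
    mul_ite, mul_zero, Finset.sum_ite_eq', Finset.mem_univ, if_true]
  exact Finset.sum_congr rfl fun j _ => by ring

lemma eigvecMatrix_mem_unitaryGroup {N : ℕ} {u : Fin N → Fin N → ℂ}
    (hu : ∀ i j, star (u i) ⬝ᵥ u j = if i = j then 1 else 0) :
    eigvecMatrix u ∈ unitaryGroup (Fin N) ℂ := by
  rw [mem_unitaryGroup_iff']
  ext i j
  simpa [eigvecMatrix, mul_apply, one_apply, dotProduct] using hu i j

lemma norm_cexp_I_mul_sub_one (s x : ℝ) :
    ‖Complex.exp (Complex.I * s * x) - 1‖ = 2 * |Real.sin (s * x / 2)| := by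
  rw [mul_assoc, ← Complex.ofReal_mul, Complex.norm_exp_I_mul_ofReal_sub_one, norm_mul,
    Real.norm_eq_abs, Real.norm_eq_abs, abs_two]

lemma norm_cexp_I_mul_sub_one_le_two (s x : ℝ) :
    ‖Complex.exp (Complex.I * s * x) - 1‖ ≤ 2 := by
  rw [norm_cexp_I_mul_sub_one]
  linarith [Real.abs_sin_le_one (s * x / 2)]

section Spectral

variable {N : ℕ} {u : Fin N → Fin N → ℂ}
  (hu : ∀ i j, star (u i) ⬝ᵥ u j = if i = j then 1 else 0)
include hu

def specOpAlgHom : (Fin N → ℂ) →ₐ[ℂ] Matrix (Fin N) (Fin N) ℂ :=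
  (Unitary.conjStarAlgAut ℂ _ ⟨eigvecMatrix u, eigvecMatrix_mem_unitaryGroup hu⟩
    ).toAlgEquiv.toAlgHom.comp (diagonalAlgHom ℂ)

lemma specOpAlgHom_apply (c : Fin N → ℂ) : specOpAlgHom hu c = specOp u c := by
  rw [specOp_eq_conj_diagonal]; rfl

lemma specOp_sub_one_pow (c : Fin N → ℂ) (r : ℕ) :
    (specOp u c - 1) ^ r = specOp u ((c - 1) ^ r) := by
  simp only [← specOpAlgHom_apply hu, map_pow, map_sub, map_one]

lemma cnorm2_specOp_mulVec (c f : Fin N → ℂ) :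
    cnorm2 (specOp u c *ᵥ f) = cnorm2 (c * (star (eigvecMatrix u) *ᵥ f)) := by
  have hU := eigvecMatrix_mem_unitaryGroup hu
  rw [specOp_eq_conj_diagonal, ← mulVec_mulVec, ← mulVec_mulVec,
    cnorm2_mulVec_of_mem_unitaryGroup hU]
  congr 1
  ext j
  exact mulVec_diagonal _ _ j

lemma Pproj_succ_sub_Pproj {k : ℕ} (hk : k < N) :
    Pproj u (k + 1) - Pproj u k = specOp u (Pi.single ⟨k, hk⟩ 1) := by
  simp only [Pproj, ← specOpAlgHom_apply hu, ← map_sub]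
  congr 1
  ext j
  simp only [Pi.sub_apply, Pi.single_apply, Fin.ext_iff]
  split_ifs <;> first | omega | norm_num

lemma cnorm2_Tmat_sub_one_pow_mulVec (lam : Fin N → ℝ) (r : ℕ) (s : ℝ) (f : Fin N → ℂ) :
    cnorm2 ((Tmat u lam s - 1) ^ r *ᵥ f) =
      cnorm2 ((fun j => (Complex.exp (Complex.I * s * Real.sqrt (lam j)) - 1) ^ r) *
        (star (eigvecMatrix u) *ᵥ f)) := by
  rw [Tmat, specOp_sub_one_pow hu, cnorm2_specOp_mulVec hu]
  rfl

lemma cnorm2_Tmat_sub_one_pow_mulVec_le (lam : Fin N → ℝ) (r : ℕ) (s : ℝ) (f : Fin N → ℂ) :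
    cnorm2 ((Tmat u lam s - 1) ^ r *ᵥ f) ≤ 2 ^ r * cnorm2 f := by
  rw [cnorm2_Tmat_sub_one_pow_mulVec hu, ← cnorm2_mulVec_of_mem_unitaryGroup
    (Unitary.star_mem (eigvecMatrix_mem_unitaryGroup hu)) f]
  refine cnorm2_mul_le (by positivity) (fun j => ?_) _
  rw [norm_pow]
  gcongr
  exact norm_cexp_I_mul_sub_one_le_two _ _

lemma cnorm2_le_omegaMod (lam : Fin N → ℝ) (r : ℕ) (f : Fin N → ℂ) {s t : ℝ} (hs : |s| ≤ t) :
    cnorm2 ((Tmat u lam s - 1) ^ r *ᵥ f) ≤ omegaMod u lam r f t := by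
  refine le_ciSup (f := fun s : {s : ℝ // |s| ≤ t} => cnorm2 ((Tmat u lam s - 1) ^ r *ᵥ f))
    ⟨2 ^ r * cnorm2 f, ?_⟩ ⟨s, hs⟩
  rintro _ ⟨s', rfl⟩
  exact cnorm2_Tmat_sub_one_pow_mulVec_le hu lam r s' f

end Spectral

/-- For every nonnegative integer `r`, every `n ∈ {2, …, N}` and every
`f ∈ ℂ^N`, `‖(P_n - P_{n-1}) f‖₂ ≤ (2 sin(1/2))^{-r} · ω_r(f, λ_n^{-1/2})`. -/
theorem stmt3
    (N : ℕ) (hN : 2 ≤ N)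
    (u : Fin N → Fin N → ℂ)
    (hu : ∀ i j, star (u i) ⬝ᵥ u j = if i = j then 1 else 0)
    (lam : Fin N → ℝ) (hmono : Monotone lam)
    (hlam1 : 0 < lam ⟨1, by omega⟩)
    (r : ℕ) (n : ℕ) (hn2 : 2 ≤ n) (hnN : n ≤ N) (f : Fin N → ℂ) :
    cnorm2 ((Pproj u n - Pproj u (n - 1)).mulVec f) ≤
      ((2 * Real.sin (1 / 2))⁻¹) ^ r *
        omegaMod u lam r f (lam ⟨n - 1, by omega⟩ ^ (-(1 : ℝ) / 2)) := by
  obtain ⟨k, rfl⟩ : ∃ k, n = k + 1 := ⟨n - 1, by omega⟩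
  set m : Fin N := ⟨k, by omega⟩
  set g := star (eigvecMatrix u) *ᵥ f
  set t := lam m ^ (-(1 : ℝ) / 2)
  have hlam : 0 < lam m := hlam1.trans_le (hmono (Fin.mk_le_mk.mpr (by omega)))
  have ht : t * Real.sqrt (lam m) = 1 := by
    rw [Real.sqrt_eq_rpow, ← Real.rpow_add hlam]
    norm_num
  have hsin : 0 < 2 * Real.sin (1 / 2) := by
    have := Real.sin_pos_of_pos_of_lt_pi (x := 1 / 2) (by norm_num) (by linarith [Real.pi_gt_three])
    positivity
  have key : (2 * Real.sin (1 / 2)) ^ r * ‖g m‖ ≤ omegaMod u lam r f t :=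
    calc (2 * Real.sin (1 / 2)) ^ r * ‖g m‖
        = ‖(Complex.exp (Complex.I * t * Real.sqrt (lam m)) - 1) ^ r * g m‖ := by
          rw [norm_mul, norm_pow, norm_cexp_I_mul_sub_one, ht, abs_of_pos (by linarith)]
      _ ≤ cnorm2 ((Tmat u lam t - 1) ^ r *ᵥ f) :=
          (norm_le_cnorm2 _ m).trans_eq (cnorm2_Tmat_sub_one_pow_mulVec hu lam r t f).symm
      _ ≤ omegaMod u lam r f t :=
          cnorm2_le_omegaMod hu lam r f (abs_of_pos (Real.rpow_pos_of_pos hlam _)).le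
  show cnorm2 ((Pproj u (k + 1) - Pproj u k) *ᵥ f) ≤ _ * omegaMod u lam r f t
  rw [Pproj_succ_sub_Pproj hu, cnorm2_specOp_mulVec hu, ← Pi.single_mul_left,
    one_mul, cnorm2_single, inv_pow, le_inv_mul_iff₀ (by positivity)]
  exact key
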